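/- Let K be a finite extension of ℚ_p and let N/K be a fully ramified cyclic extension of degree p with unique ramification break b, where p ∤ b. Then for every α ∈ K there exists ρ ∈ N with v_N(ρ) = v_N(α) − (p−1)b and Tr_{N/K}(ρ) = α. -/

import Mathlib

/-- An additive, normalized discrete valuation on a field `F`, recorded as a function
`v : F → ℤ` (the value at `0` is irrelevant): `v` is additive on products of nonzero
elements, satisfies the ultrametric inequality on nonzero elements, and is surjective
onto `ℤ` (this is the normalization `v(π) = 1` for a uniformizer `π`). -/
structure IsNormDiscreteVal {F : Type*} [Field F] (v : F → ℤ) : Prop where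
  map_mul : ∀ ⦃x y : F⦄, x ≠ 0 → y ≠ 0 → v (x * y) = v x + v y
  min_le_add : ∀ ⦃x y : F⦄, x ≠ 0 → y ≠ 0 → x + y ≠ 0 → min (v x) (v y) ≤ v (x + y)
  surj : ∀ k : ℤ, ∃ x : F, x ≠ 0 ∧ v x = k

/-- The `i`-th ramification group (lower numbering) of `N/K`, as a set of `K`-algebra
automorphisms of `N`:  `G_i = {σ : v_N(σ π_N − π_N) ≥ i + 1}`, where `π_N` is a
uniformizer of `N`; the case `σ π_N = π_N` corresponds to the convention `v_N(0) = ∞`. -/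
def ramSet (K N : Type*) [Field K] [Field N] [Algebra K N]
    (vN : N → ℤ) (πN : N) (i : ℤ) : Set (N ≃ₐ[K] N) :=
  {σ | σ πN = πN ∨ i + 1 ≤ vN (σ πN - πN)}

/-- `ρ` generates a normal basis of `N` over `K`: the conjugates `σ ρ` for
`σ ∈ Gal(N/K)` form a `K`-vector space basis of `N`. -/
def IsNormalBasisGenerator (K N : Type*) [Field K] [Field N] [Algebra K N] (ρ : N) : Prop :=
  ∃ b : Module.Basis (N ≃ₐ[K] N) K N, ∀ σ : N ≃ₐ[K] N, b σ = σ ρ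

/-! Put `θ = π_N ^ (p - 1) / f'(π_N)`, where `f` is the minimal polynomial of `π_N` over `K`.
Euler's formula gives `Tr θ = 1`. Since `f'(π_N) = ∏_{σ ≠ 1} (π_N - σ π_N)` and every factor
has valuation `b + 1`, `v_N(f'(π_N)) = (p - 1)(b + 1)`, hence `v_N(θ) = -(p - 1) b`, and `ρ = α θ` works. -/

open Polynomial

namespace IsNormDiscreteVal

variable {F : Type*} [Field F] {v : F → ℤ}

theorem map_one (hv : IsNormDiscreteVal v) : v 1 = 0 := by
  have := hv.map_mul (one_ne_zero (α := F)) one_ne_zero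
  rw [one_mul] at this
  omega

theorem map_neg (hv : IsNormDiscreteVal v) {x : F} (hx : x ≠ 0) : v (-x) = v x := by
  have hsq := hv.map_mul (neg_ne_zero.2 (one_ne_zero (α := F))) (neg_ne_zero.2 one_ne_zero)
  have hmul := hv.map_mul (neg_ne_zero.2 (one_ne_zero (α := F))) hx
  rw [neg_mul_neg, one_mul, hv.map_one] at hsq
  rw [neg_one_mul] at hmul
  omega

theorem map_div (hv : IsNormDiscreteVal v) {x y : F} (hx : x ≠ 0) (hy : y ≠ 0) :
    v (x / y) = v x - v y := by
  have := hv.map_mul (div_ne_zero hx hy) hy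
  rw [div_mul_cancel₀ x hy] at this
  omega

theorem map_pow (hv : IsNormDiscreteVal v) {x : F} (hx : x ≠ 0) (n : ℕ) :
    v (x ^ n) = n * v x := by
  induction n with
  | zero => simpa using hv.map_one
  | succ n ih =>
    rw [pow_succ, hv.map_mul (pow_ne_zero n hx) hx, ih]
    push_cast
    ring

theorem map_prod (hv : IsNormDiscreteVal v) {ι : Type*} (s : Finset ι) (f : ι → F)
    (hf : ∀ i ∈ s, f i ≠ 0) : v (∏ i ∈ s, f i) = ∑ i ∈ s, v (f i) := by
  induction s using Finset.cons_induction with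
  | empty => simpa using hv.map_one
  | cons i s hi ih =>
    rw [Finset.forall_mem_cons] at hf
    rw [Finset.prod_cons, Finset.sum_cons, hv.map_mul hf.1 (Finset.prod_ne_zero_iff.2 hf.2),
      ih hf.2]

end IsNormDiscreteVal

section Generator

variable {K L : Type*} [Field K] [Field L] [Algebra K L]

theorem Algebra.adjoin_singleton_eq_top_of_finrank_prime (hp : (Module.finrank K L).Prime)
    {x : L} (hx : x ∉ Set.range (algebraMap K L)) : Algebra.adjoin K {x} = ⊤ := by
  refine ((Subalgebra.isSimpleOrder_of_finrank_prime K L hp).eq_bot_or_eq_top _).resolve_left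
    fun hbot => hx ?_
  rw [← Algebra.mem_bot, ← hbot]
  exact Algebra.self_mem_adjoin_singleton K x

theorem notMem_range_algebraMap_of_val_eq_one {p : ℕ} (hp : 1 < p) {vK : K → ℤ} {vL : L → ℤ}
    (hfull : ∀ x : K, x ≠ 0 → vL (algebraMap K L x) = p * vK x)
    {π : L} (hπ0 : π ≠ 0) (hπ1 : vL π = 1) : π ∉ Set.range (algebraMap K L) := by
  rintro ⟨x, rfl⟩
  have hx : x ≠ 0 := by
    rintro rfl
    exact hπ0 (map_zero _)
  have hdvd : (p : ℤ) ∣ 1 := ⟨vK x, hπ1 ▸ hfull x hx⟩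
  exact hp.ne' (by exact_mod_cast Int.eq_one_of_dvd_one (Int.natCast_nonneg p) hdvd)

end Generator

namespace PowerBasis

variable {K L : Type*} [Field K] [Field L] [Algebra K L] [FiniteDimensional K L]

/-- Euler: `π ^ (n - 1) / f'(π)` is the last vector of the trace-dual basis of `1, π, …, π ^ (n - 1)`. -/
theorem trace_gen_pow_dim_sub_one_div_aeval_derivative_minpoly [Algebra.IsSeparable K L]
    (pb : PowerBasis K L) :
    Algebra.trace K L (pb.gen ^ (pb.dim - 1) / aeval pb.gen (derivative (minpoly K pb.gen))) =
      1 := by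
  have hdim : pb.dim - 1 < pb.dim := Nat.sub_one_lt pb.dim_ne_zero
  have key := pb.basis.trace_traceDual_mul ⟨pb.dim - 1, hdim⟩ ⟨pb.dim - 1, hdim⟩
  have hcoeff : (minpolyDiv K pb.gen).coeff (pb.dim - 1) = 1 := by
    rw [← pb.natDegree_minpoly, ← natDegree_minpolyDiv]
    exact (minpolyDiv_monic pb.isIntegral_gen).coeff_natDegree
  rw [Module.Basis.traceDual_powerBasis_eq, pb.basis_eq_pow, if_pos rfl] at key
  simpa [hcoeff, div_eq_inv_mul] using key

variable [IsGalois K L]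

theorem map_minpoly_gen_eq_nodal (pb : PowerBasis K L) :
    (minpoly K pb.gen).map (algebraMap K L) =
      Lagrange.nodal Finset.univ fun σ : L ≃ₐ[K] L => σ pb.gen := by
  have hinj : Function.Injective fun σ : L ≃ₐ[K] L => σ pb.gen := fun σ τ h =>
    AlgEquiv.coe_toAlgHom_injective (pb.algHom_ext h)
  refine Polynomial.eq_of_monic_of_dvd_of_natDegree_le Lagrange.nodal_monic
    ((minpoly.monic pb.isIntegral_gen).map _) ?_ ?_
  · refine Finset.prod_dvd_of_coprime ((pairwise_coprime_X_sub_C hinj).set_pairwise _)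
      fun σ _ => ?_
    rw [dvd_iff_isRoot, IsRoot, eval_map_algebraMap]
    exact minpoly.aeval_algHom K σ.toAlgHom pb.gen
  · rw [natDegree_map, pb.natDegree_minpoly, Lagrange.natDegree_nodal, Finset.card_univ,
      ← Nat.card_eq_fintype_card, IsGalois.card_aut_eq_finrank, pb.finrank]

theorem aeval_derivative_minpoly_gen [DecidableEq (L ≃ₐ[K] L)] (pb : PowerBasis K L) :
    aeval pb.gen (derivative (minpoly K pb.gen)) =
      ∏ σ ∈ Finset.univ.erase (1 : L ≃ₐ[K] L), (pb.gen - σ pb.gen) := by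
  rw [← Lagrange.eval_nodal, ← eval_map_algebraMap, ← derivative_map, map_minpoly_gen_eq_nodal]
  exact Lagrange.eval_nodal_derivative_eval_node_eq (v := fun σ : L ≃ₐ[K] L => σ pb.gen)
    (Finset.mem_univ 1)

end PowerBasis

section Ramification

variable {K N : Type*} [Field K] [Field N] [Algebra K N] {vN : N → ℤ} {πN : N} {b : ℤ}

theorem ramSet_antitone : Antitone (ramSet K N vN πN) := fun _ _ hij _ hσ =>
  hσ.imp_right (le_trans (by omega))

theorem val_sub_eq_break_add_one
    (hb : ∀ i : ℤ, ramSet K N vN πN (i + 1) ⊂ ramSet K N vN πN i ↔ i = b)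
    {σ : N ≃ₐ[K] N} (hσ : σ πN ≠ πN) : vN (σ πN - πN) = b + 1 := by
  set c := vN (σ πN - πN)
  have hjump : ramSet K N vN πN (c - 1 + 1) ⊂ ramSet K N vN πN (c - 1) :=
    (Set.ssubset_iff_of_subset (ramSet_antitone (by omega))).2
      ⟨σ, Or.inr (by omega), fun h => h.elim hσ (by omega)⟩
  have := (hb (c - 1)).1 hjump
  omega

theorem val_aeval_derivative_minpoly_gen [FiniteDimensional K N] [IsGalois K N]
    (hvN : IsNormDiscreteVal vN) (pb : PowerBasis K N)
    (hb : ∀ i : ℤ, ramSet K N vN pb.gen (i + 1) ⊂ ramSet K N vN pb.gen i ↔ i = b) :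
    vN (aeval pb.gen (derivative (minpoly K pb.gen))) =
      ((Module.finrank K N : ℤ) - 1) * (b + 1) := by
  classical
  have hmoves : ∀ σ ∈ Finset.univ.erase (1 : N ≃ₐ[K] N), σ pb.gen ≠ pb.gen := fun σ hσ h =>
    (Finset.mem_erase.1 hσ).1 (AlgEquiv.coe_toAlgHom_injective (pb.algHom_ext h))
  have hne : ∀ σ ∈ Finset.univ.erase (1 : N ≃ₐ[K] N), pb.gen - σ pb.gen ≠ 0 :=
    fun σ hσ => sub_ne_zero.2 (hmoves σ hσ).symm
  have hval : ∀ σ ∈ Finset.univ.erase (1 : N ≃ₐ[K] N), vN (pb.gen - σ pb.gen) = b + 1 :=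
    fun σ hσ => by
      rw [← neg_sub, hvN.map_neg (sub_ne_zero.2 (hmoves σ hσ)),
        val_sub_eq_break_add_one hb (hmoves σ hσ)]
  rw [pb.aeval_derivative_minpoly_gen, hvN.map_prod _ _ hne, Finset.sum_congr rfl hval,
    Finset.sum_const, Finset.card_erase_of_mem (Finset.mem_univ 1), Finset.card_univ,
    ← Nat.card_eq_fintype_card, IsGalois.card_aut_eq_finrank, nsmul_eq_mul,
    Nat.cast_sub Module.finrank_pos]
  push_cast
  ring

end Ramification

theorem exists_trace_preimage_degree_p_general
    (p : ℕ) [Fact p.Prime]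
    (K N : Type*) [Field K] [Field N]
    [Algebra K N] [IsGalois K N]
    (hdeg : Module.finrank K N = p)
    (vK : K → ℤ)
    (vN : N → ℤ) (hvN : IsNormDiscreteVal vN)
    (hfull : ∀ x : K, x ≠ 0 → vN (algebraMap K N x) = (p : ℤ) * vK x)
    (πN : N) (hπN0 : πN ≠ 0) (hπN1 : vN πN = 1)
    (b : ℤ)
    (hb : ∀ i : ℤ, ramSet K N vN πN (i + 1) ⊂ ramSet K N vN πN i ↔ i = b) :
    ∀ α : K, α ≠ 0 →
      ∃ ρ : N, ρ ≠ 0 ∧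
        vN ρ = vN (algebraMap K N α) - ((p : ℤ) - 1) * b ∧
        Algebra.trace K N ρ = α := by
  intro α hα
  have hp : p.Prime := Fact.out
  have : FiniteDimensional K N := .of_finrank_pos (hdeg ▸ hp.pos)
  have hgen := Algebra.adjoin_singleton_eq_top_of_finrank_prime (hdeg ▸ hp)
    (notMem_range_algebraMap_of_val_eq_one hp.one_lt hfull hπN0 hπN1)
  obtain ⟨pb, rfl⟩ : ∃ pb : PowerBasis K N, pb.gen = πN :=
    ⟨.ofAdjoinEqTop (Algebra.IsIntegral.isIntegral πN) hgen, rfl⟩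
  set D := aeval pb.gen (derivative (minpoly K pb.gen))
  have hD0 : D ≠ 0 :=
    (Algebra.IsSeparable.isSeparable K pb.gen).aeval_derivative_ne_zero (minpoly.aeval K _)
  have hvD : vN D = ((p : ℤ) - 1) * (b + 1) := hdeg ▸ val_aeval_derivative_minpoly_gen hvN pb hb
  have hα' : algebraMap K N α ≠ 0 := (_root_.map_ne_zero _).2 hα
  have hθ0 : pb.gen ^ (p - 1) / D ≠ 0 := div_ne_zero (pow_ne_zero _ hπN0) hD0
  refine ⟨algebraMap K N α * (pb.gen ^ (p - 1) / D), mul_ne_zero hα' hθ0, ?_, ?_⟩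
  · rw [hvN.map_mul hα' hθ0, hvN.map_div (pow_ne_zero _ hπN0) hD0, hvN.map_pow hπN0, hπN1, hvD,
      Nat.cast_sub hp.one_le]
    push_cast
    ring
  · rw [← Algebra.smul_def, map_smul, ← hdeg, pb.finrank,
      pb.trace_gen_pow_dim_sub_one_div_aeval_derivative_minpoly, smul_eq_mul, mul_one]

/-- **Lemma 2, base case (converse).** Let `N/K` be a fully ramified cyclic extension of
degree `p` with unique ramification break `b`, where `p ∤ b`.  Then for every `α ∈ K`
there is `ρ ∈ N` with `v_N(ρ) = v_N(α) − (p−1)·b` and `Tr_{N/K}(ρ) = α`. -/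
theorem exists_trace_preimage_degree_p
    (p : ℕ) [Fact p.Prime]
    (K N : Type*) [Field K] [Field N]
    [Algebra ℚ_[p] K] [FiniteDimensional ℚ_[p] K]
    [Algebra K N] [IsGalois K N]
    (hdeg : Module.finrank K N = p)
    (vK : K → ℤ) (hvK : IsNormDiscreteVal vK)
    (vN : N → ℤ) (hvN : IsNormDiscreteVal vN)
    (hfull : ∀ x : K, x ≠ 0 → vN (algebraMap K N x) = (p : ℤ) * vK x)
    (πN : N) (hπN0 : πN ≠ 0) (hπN1 : vN πN = 1)
    (b : ℤ)
    (hb : ∀ i : ℤ, ramSet K N vN πN (i + 1) ⊂ ramSet K N vN πN i ↔ i = b)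
    (hpb : ¬ (p : ℤ) ∣ b) :
    ∀ α : K, α ≠ 0 →
      ∃ ρ : N, ρ ≠ 0 ∧
        vN ρ = vN (algebraMap K N α) - ((p : ℤ) - 1) * b ∧
        Algebra.trace K N ρ = α :=
  exists_trace_preimage_degree_p_general p K N hdeg vK vN hvN hfull πN hπN0 hπN1 b hb
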